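/- Let G be a module over Z_p (the integers localized at a prime p) with a partial decomposition basis C, and let Y ⊆ X for some X ∈ C. Then the submodule ⟨Y⟩ generated by Y is nice in G, i.e. every coset of ⟨Y⟩ in G contains an element of maximal p-height. -/

import Mathlib

noncomputable section

namespace UlmW

universe u

variable {R : Type*} [CommRing R]

/-- The submodule `p^α M`, defined by transfinite recursion on `α`. -/
def ppow {M : Type u} [AddCommGroup M] [Module R M] (p : R) (α : Ordinal.{u}) :
    Submodule R M :=
  Ordinal.limitRecOn α ⊤ (fun _ S => Submodule.map (LinearMap.lsmul R M p) S)
    fun β _ ih => ⨅ (γ : Set.Iio β), ih γ.1 γ.2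

open scoped Classical in
/-- The `p`-height of `x`, with `⊤` playing the role of `∞`. -/
def pheight {M : Type u} [AddCommGroup M] [Module R M] (p : R) (x : M) :
    WithTop Ordinal.{u} :=
  if h : ∃ α : Ordinal.{u}, x ∈ ppow p α ∧ x ∉ ppow p (α + 1) then (h.choose : WithTop Ordinal)
  else ⊤

/-- `H⁰ = {x : ∃ a ≠ 0, a • x ∈ H}`. -/
def hull {M : Type u} [AddCommGroup M] [Module R M] (H : Submodule R M) : Set M :=
  {x | ∃ a : R, a ≠ 0 ∧ a • x ∈ H}

/-- `X` is a decomposition set with respect to the single prime `p`. -/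
def IsDecompWrt {M : Type u} [AddCommGroup M] [Module R M] (p : R) (X : Set M) : Prop :=
  (LinearIndependent R (fun x : X => (x : M))) ∧
  (∀ x ∈ X, ∀ a : R, a ≠ 0 → a • x ≠ 0) ∧
  (∀ s : Finset M, ↑s ⊆ X → ∀ c : M → R,
    pheight p (∑ x ∈ s, c x • x) = s.inf fun x => pheight p (c x • x))

/-- `X` is a decomposition set (with respect to every prime of `R`). -/
def IsDecompositionSet (R : Type*) [CommRing R] {M : Type u} [AddCommGroup M] [Module R M]
    (X : Set M) : Prop :=
  ∀ p : R, Prime p → IsDecompWrt p X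

/-- partial decomposition basis, heights taken w.r.t. a fixed prime `p`. -/
def IsPDBWrt {M : Type u} [AddCommGroup M] [Module R M] (p : R) (C : Set (Set M)) : Prop :=
  C.Nonempty ∧ (∀ X ∈ C, X.Finite) ∧ (∀ X ∈ C, IsDecompWrt p X) ∧
  ∀ X ∈ C, ∀ x : M, ∃ Y ∈ C, X ⊆ Y ∧ x ∈ hull (Submodule.span R Y)

/-- partial decomposition basis (heights w.r.t. all primes of `R`). -/
def IsPDB (R : Type*) [CommRing R] {M : Type u} [AddCommGroup M] [Module R M] (C : Set (Set M)) : Prop :=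
  C.Nonempty ∧ (∀ X ∈ C, X.Finite) ∧ (∀ X ∈ C, IsDecompositionSet R X) ∧
  ∀ X ∈ C, ∀ x : M, ∃ Y ∈ C, X ⊆ Y ∧ x ∈ hull (Submodule.span R Y)

/-- A partial isomorphism system `I : G ≅_p H`. -/
def IsPartialIsoSystem {M N : Type*} [AddCommGroup M] [Module R M]
    [AddCommGroup N] [Module R N] (I : Set (M →ₗ.[R] N)) : Prop :=
  I.Nonempty ∧
  (∀ f ∈ I, Function.Injective f.toFun) ∧
  (∀ f ∈ I, ∀ a : M, ∃ g ∈ I, f ≤ g ∧ a ∈ g.domain) ∧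
  (∀ f ∈ I, ∀ b : N, ∃ g ∈ I, f ≤ g ∧ ∃ y : g.domain, g y = b)

/-- The Ulm sequence of `x`: `U(x) = (|pⁱ x|)ᵢ`. -/
def UlmSeqOf {M : Type u} [AddCommGroup M] [Module R M] (p : R) (x : M) :
    ℕ → WithTop Ordinal.{u} :=
  fun i => pheight p ((p ^ i) • x)

/-- `u` is an Ulm sequence. -/
def IsUlmSeq (u : ℕ → WithTop Ordinal.{u}) : Prop :=
  ∀ i, (u i = ⊤ → u (i + 1) = ⊤) ∧ (u i ≠ ⊤ → u i < u (i + 1))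

/-- Equivalence of Ulm sequences. -/
def UlmEquiv (u v : ℕ → WithTop Ordinal.{u}) : Prop :=
  ∃ m n : ℕ, ∀ i, u (i + n) = v (i + m)

/-- `X` contains at least `n` elements whose Ulm sequence is equivalent to `u`. -/
def HasAtLeast {M : Type u} [AddCommGroup M] [Module R M] (p : R)
    (u : ℕ → WithTop Ordinal.{u}) (n : ℕ) (X : Set M) : Prop :=
  ∃ s : Finset M, ↑s ⊆ X ∧ n ≤ s.card ∧ ∀ x ∈ s, UlmEquiv (UlmSeqOf p x) u

/-- `ŵ_C(e,G)` where `e` is the class of the Ulm sequence `u`. -/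
def wHat {M : Type u} [AddCommGroup M] [Module R M] (p : R) (C : Set (Set M))
    (u : ℕ → WithTop Ordinal.{u}) : ℕ∞ :=
  sSup {N : ℕ∞ | ∃ n : ℕ, N = (n : ℕ∞) ∧ ∃ X ∈ C, HasAtLeast p u n X}

/-- `x` is proper with respect to `S`. -/
def IsProper {M : Type u} [AddCommGroup M] [Module R M] (p : R) (S : Submodule R M)
    (x : M) : Prop :=
  ∀ s ∈ S, pheight p (x + s) ≤ pheight p x

/-- `H` is a nice submodule. -/
def IsNice {M : Type u} [AddCommGroup M] [Module R M] (p : R) (H : Submodule R M) : Prop :=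
  ∀ x : M, ∃ h ∈ H, ∀ h' ∈ H, pheight p (x + h') ≤ pheight p (x + h)

/-- The Ulm invariant `u_p(σ, M)`: the dimension of `(p^σ M)[p]/(p^{σ+1} M)[p]`
over the residue field `R/(p)`. -/
def uCard (p : R) (M : Type u) [AddCommGroup M] [Module R M] (σ : Ordinal.{u}) :
    Cardinal :=
  let V : Submodule R M := ppow p σ ⊓ Submodule.torsionBy R M p
  let W : Submodule R V := (ppow p (σ + 1) ⊓ Submodule.torsionBy R M p).comap V.subtype
  Module.rank (R ⧸ Ideal.span {p})
    ((V ⧸ W) ⧸ (Ideal.span {p} • (⊤ : Submodule R (V ⧸ W))))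

/-- `û_p(σ, M) = min (u_p(σ, M), ω)`. -/
def uHat (p : R) (M : Type u) [AddCommGroup M] [Module R M] (σ : Ordinal.{u}) : Cardinal :=
  min (uCard p M σ) Cardinal.aleph0

/-- `û_p(∞, M) = min (dim (p^∞ M)[p], ω)`. -/
def uHatInf (p : R) (M : Type u) [AddCommGroup M] [Module R M] : Cardinal :=
  let V : Submodule R M := (⨅ α : Ordinal.{u}, ppow p α) ⊓ Submodule.torsionBy R M p
  min (Module.rank (R ⧸ Ideal.span {p})
    (V ⧸ (Ideal.span {p} • (⊤ : Submodule R V)))) Cardinal.aleph0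

end UlmW

open UlmW

/-- The ideal `(p) ⊆ ℤ` is prime. -/
instance zpSpanPrime (p : ℤ) [hp : Fact (Prime p)] : (Ideal.span {p} : Ideal ℤ).IsPrime :=
  (Ideal.span_singleton_prime hp.out.ne_zero).mpr hp.out

/-- `ℤ_(p)`, the integers localized at the prime `p`. -/
abbrev Zp (p : ℤ) [Fact (Prime p)] : Type :=
  Localization.AtPrime (Ideal.span {p} : Ideal ℤ)


universe u

open UlmW

/-!
Fix `x` and take `Z ∈ C` with `pᵏ x ∈ ⟨Z⟩`. For every height `β` attained on the coset
`x + ⟨Y⟩` pick `h_β ∈ ⟨Y⟩` with `|x + h_β| ≥ β`. As `Z` is a decomposition set, the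
`Y`-coordinates of the `h_β` form Cauchy nets for the `p`-height topology, and an element of
`⟨Y⟩` whose coordinates are limits of these nets attains every such `β`, hence is maximal.
A coordinate `y` converges inside `Z_p` for one of two reasons: either some `|pᵐ y|` bounds all
attained heights, and then the net is eventually constant modulo `pᵐ`; or the `|pᵐ y|` stay
below the attained heights, and then `pᵏ (x + h_β) ∈ p^β G` forces the coordinates towards
`-c_y / pᵏ`, where `c_y` is the `y`-coordinate of `pᵏ x`.
-/

instance Zp.isDiscreteValuationRing (p : ℤ) [hp : Fact (Prime p)] :
    IsDiscreteValuationRing (Zp p) :=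
  IsLocalization.AtPrime.isDiscreteValuationRing_of_dedekind_domain ℤ
    (P := Ideal.span {p}) (by simpa using hp.out.ne_zero) (Zp p)

theorem Zp.irreducible_p (p : ℤ) [Fact (Prime p)] : Irreducible (p : Zp p) := by
  rw [IsDiscreteValuationRing.irreducible_iff_uniformizer,
    ← Localization.AtPrime.map_eq_maximalIdeal, Ideal.map_span, Set.image_singleton,
    eq_intCast]

namespace UlmW

open Filter Submodule

section CommRing

variable {R : Type*} [CommRing R] {M : Type u} [AddCommGroup M] [Module R M] {p : R}

theorem ppow_zero : ppow (M := M) p 0 = ⊤ :=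
  Ordinal.limitRecOn_zero _ _ _

theorem ppow_add_one (α : Ordinal.{u}) :
    ppow (M := M) p (α + 1) = (ppow p α).map (LinearMap.lsmul R M p) :=
  Ordinal.limitRecOn_add_one _ _ _ _

theorem ppow_of_isSuccLimit {l : Ordinal.{u}} (hl : Order.IsSuccLimit l) :
    ppow (M := M) p l = ⨅ γ : Set.Iio l, ppow p γ.1 :=
  Ordinal.limitRecOn_limit _ _ _ _ hl

theorem ppow_add_one_le (α : Ordinal.{u}) : ppow (M := M) p (α + 1) ≤ ppow p α := by
  rw [ppow_add_one]
  rintro _ ⟨x, hx, rfl⟩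
  exact (ppow p α).smul_mem p hx

theorem ppow_antitone : Antitone (ppow (M := M) p) := by
  intro β α hβα
  induction α using Ordinal.limitRecOn generalizing β with
  | zero => rw [nonpos_iff_eq_zero.1 hβα]
  | add_one α ih =>
    rcases hβα.eq_or_lt with rfl | hlt
    · rfl
    · exact (ppow_add_one_le α).trans (ih (Order.lt_add_one_iff.1 hlt))
  | limit l hl _ =>
    rcases hβα.eq_or_lt with rfl | hlt
    · rfl
    · rw [ppow_of_isSuccLimit hl]
      exact iInf_le (fun γ : Set.Iio l => ppow p γ.1) ⟨β, hlt⟩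

theorem mem_ppow_of_forall_mem_ppow_add_one {x : M}
    (h : ∀ α : Ordinal.{u}, x ∈ ppow p α → x ∈ ppow p (α + 1)) (β : Ordinal.{u}) :
    x ∈ ppow p β := by
  induction β using Ordinal.limitRecOn with
  | zero => simp [ppow_zero]
  | add_one α ih => exact h α ih
  | limit l hl ih =>
    rw [ppow_of_isSuccLimit hl]
    exact (Submodule.mem_iInf _).2 fun γ => ih γ.1 γ.2

theorem coe_le_pheight_iff {x : M} {β : Ordinal.{u}} :
    (β : WithTop Ordinal.{u}) ≤ pheight p x ↔ x ∈ ppow p β := by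
  classical
  rw [pheight]
  split_ifs with h
  · obtain ⟨hmem, hnot⟩ := h.choose_spec
    rw [WithTop.coe_le_coe]
    refine ⟨fun hle => ppow_antitone hle hmem, fun hx => not_lt.1 fun hlt => hnot ?_⟩
    exact ppow_antitone (Order.add_one_le_of_lt hlt) hx
  · push Not at h
    simpa using mem_ppow_of_forall_mem_ppow_add_one h β

theorem pheight_le_pheight {x y : M} (h : ∀ β : Ordinal.{u}, x ∈ ppow p β → y ∈ ppow p β) :
    pheight p x ≤ pheight p y :=
  WithTop.forall_coe_le_iff_le.1 fun β hβ =>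
    coe_le_pheight_iff.2 (h β (coe_le_pheight_iff.1 hβ))

theorem pheight_zero : pheight p (0 : M) = ⊤ := by
  simp [pheight]

theorem pheight_le_pheight_smul (r : R) (x : M) : pheight p x ≤ pheight p (r • x) :=
  pheight_le_pheight fun β hx => (ppow p β).smul_mem r hx

theorem pheight_units_smul (u : Rˣ) (x : M) : pheight p ((u : R) • x) = pheight p x :=
  le_antisymm ((pheight_le_pheight_smul (↑u⁻¹ : R) _).trans_eq
    (by rw [smul_smul, Units.inv_mul, one_smul])) (pheight_le_pheight_smul _ x)

theorem ulmSeqOf_monotone (y : M) : Monotone (UlmSeqOf p y) := by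
  intro m n hmn
  obtain ⟨j, rfl⟩ := Nat.exists_eq_add_of_le hmn
  rw [UlmSeqOf, UlmSeqOf, pow_add, mul_comm, mul_smul]
  exact pheight_le_pheight_smul _ _

theorem ulmSeqOf_le_pheight_of_pow_dvd {y : M} {n : ℕ} {d : R} (h : p ^ n ∣ d) :
    UlmSeqOf p y n ≤ pheight p (d • y) := by
  obtain ⟨r, rfl⟩ := h
  rw [mul_comm, mul_smul]
  exact pheight_le_pheight_smul r _

theorem IsDecompWrt.smul_mem_ppow_of_sum_mem {Z : Set M} (hZ : IsDecompWrt p Z) {s : Finset M}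
    (hs : ↑s ⊆ Z) {c : M → R} {β : Ordinal.{u}} (h : ∑ z ∈ s, c z • z ∈ ppow p β) {z : M}
    (hz : z ∈ s) : c z • z ∈ ppow p β := by
  rw [← coe_le_pheight_iff, hZ.2.2 s hs c, Finset.le_inf_iff] at h
  exact coe_le_pheight_iff.1 (h z hz)

theorem IsDecompWrt.sub_smul_mem_ppow {Z : Set M} (hZ : IsDecompWrt p Z) {s : Finset M}
    (hs : ↑s ⊆ Z) {x : M} {f g : M → R} {β : Ordinal.{u}}
    (hf : x + ∑ y ∈ s, f y • y ∈ ppow p β) (hg : x + ∑ y ∈ s, g y • y ∈ ppow p β) {y : M}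
    (hy : y ∈ s) : (g y - f y) • y ∈ ppow p β := by
  refine hZ.smul_mem_ppow_of_sum_mem hs (c := g - f) ?_ hy
  have hdiff : ∑ z ∈ s, (g - f) z • z = (x + ∑ z ∈ s, g z • z) - (x + ∑ z ∈ s, f z • z) := by
    simp [sub_smul, Finset.sum_sub_distrib]
  rw [hdiff]
  exact sub_mem hg hf

theorem IsDecompWrt.add_pow_mul_smul_mem_ppow {Z : Set M} (hZ : IsDecompWrt p Z)
    {s t : Finset M} (hst : s ⊆ t) (ht : ↑t ⊆ Z) {x : M} {c f : M → R} {k : ℕ}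
    (hc : ∑ z ∈ t, c z • z = p ^ k • x) (hf : f.support ⊆ s) {β : Ordinal.{u}}
    (h : x + ∑ y ∈ s, f y • y ∈ ppow p β) {y : M} (hy : y ∈ t) :
    (c y + p ^ k * f y) • y ∈ ppow p β := by
  refine hZ.smul_mem_ppow_of_sum_mem ht (c := fun z => c z + p ^ k * f z) ?_ hy
  have hsum : ∑ z ∈ t, (c z + p ^ k * f z) • z = p ^ k • (x + ∑ y ∈ s, f y • y) := by
    rw [smul_add, ← hc, Finset.smul_sum, Finset.sum_subset hst fun z _ hz => by
      rw [Function.notMem_support.1 fun hfz => hz (hf hfz), zero_smul, smul_zero],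
      ← Finset.sum_add_distrib]
    simp only [add_smul, mul_smul]
  rw [hsum]
  exact (ppow p β).smul_mem _ h

end CommRing

section DiscreteValuationRing

variable {R : Type*} [CommRing R] [IsDomain R] [IsDiscreteValuationRing R] {p : R}
  {M : Type u} [AddCommGroup M] [Module R M]

theorem exists_pow_smul_mem_of_mem_hull (hp : Irreducible p) {N : Submodule R M} {x : M}
    (hx : x ∈ hull N) : ∃ k : ℕ, p ^ k • x ∈ N := by
  obtain ⟨a, ha, hax⟩ := hx
  obtain ⟨k, u, rfl⟩ := IsDiscreteValuationRing.eq_unit_mul_pow_irreducible ha hp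
  refine ⟨k, ?_⟩
  simpa [smul_smul] using N.smul_mem (↑u⁻¹ : R) hax

variable {y : M}

theorem pow_dvd_of_ulmSeqOf_lt_pheight (hp : Irreducible p) {n : ℕ} {d : R}
    (h : ∀ m < n, UlmSeqOf p y m < pheight p (d • y)) : p ^ n ∣ d := by
  rcases eq_or_ne d 0 with rfl | hd
  · exact dvd_zero _
  obtain ⟨v, u, rfl⟩ := IsDiscreteValuationRing.eq_unit_mul_pow_irreducible hd hp
  rw [mul_smul, pheight_units_smul] at h
  exact (pow_dvd_pow p (not_lt.1 fun hv => lt_irrefl _ (h v hv))).mul_left _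

theorem le_pheight_of_ulmSeqOf_lt (hp : Irreducible p) {α : WithTop Ordinal.{u}} {k : ℕ} {d : R}
    (h : ∀ m, UlmSeqOf p y m < α → UlmSeqOf p y (m + k) < pheight p ((p ^ k * d) • y)) :
    α ≤ pheight p (d • y) := by
  rcases eq_or_ne d 0 with rfl | hd
  · simp [pheight_zero]
  obtain ⟨v, u, rfl⟩ := IsDiscreteValuationRing.eq_unit_mul_pow_irreducible hd hp
  rw [show p ^ k * (u * p ^ v) = u * p ^ (v + k) by ring, mul_smul, pheight_units_smul] at h
  rw [mul_smul, pheight_units_smul]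
  exact not_lt.1 fun hv => lt_irrefl _ (h v hv)

variable {ι : Type*} [LinearOrder ι] {ord : ι → Ordinal.{u}} {e : ι → R}

theorem exists_lim_coeff_of_le_ulmSeqOf [Nonempty ι] (hp : Irreducible p) (hord : Monotone ord)
    (hcauchy : ∀ i j, i ≤ j → (e j - e i) • y ∈ ppow p (ord i))
    (hbdd : ∃ m, ∀ i, (ord i : WithTop Ordinal.{u}) ≤ UlmSeqOf p y m) :
    ∃ l : R, ∀ i, ∀ᶠ j in atTop, (l - e j) • y ∈ ppow p (ord i) := by
  classical
  let m₀ := Nat.find hbdd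
  have hbelow : ∀ᶠ j in atTop, ∀ m ∈ Finset.range m₀, UlmSeqOf p y m < ord j := by
    refine (Finset.range m₀).eventually_all.2 fun m hm => ?_
    obtain ⟨i, hi⟩ := not_forall.1 (Nat.find_min hbdd (Finset.mem_range.1 hm))
    filter_upwards [eventually_ge_atTop i] with j hij
    exact (not_le.1 hi).trans_le (WithTop.coe_le_coe.2 (hord hij))
  obtain ⟨i₁, hi₁⟩ := eventually_atTop.1 hbelow
  refine ⟨e i₁, fun i => eventually_atTop.2 ⟨i₁, fun j hj => ?_⟩⟩
  have hdvd : p ^ m₀ ∣ e j - e i₁ := pow_dvd_of_ulmSeqOf_lt_pheight hp fun m hm =>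
    (hi₁ i₁ le_rfl m (Finset.mem_range.2 hm)).trans_le (coe_le_pheight_iff.2 (hcauchy i₁ j hj))
  rw [← coe_le_pheight_iff]
  exact (Nat.find_spec hbdd i).trans (ulmSeqOf_le_pheight_of_pow_dvd (dvd_sub_comm.1 hdvd))

theorem exists_lim_coeff_of_ulmSeqOf_lt (hp : Irreducible p) (hord : Monotone ord) {c : R}
    {k : ℕ} (hanchor : ∀ i, (c + p ^ k * e i) • y ∈ ppow p (ord i))
    (hunbdd : ∀ m, ∃ i, UlmSeqOf p y m < ord i) :
    ∃ l : R, ∀ i, ∀ᶠ j in atTop, (l - e j) • y ∈ ppow p (ord i) := by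
  obtain ⟨w, rfl⟩ : p ^ k ∣ c := by
    obtain ⟨i, hi⟩ := hunbdd k
    refine (dvd_add_left (dvd_mul_right _ (e i))).1
      (pow_dvd_of_ulmSeqOf_lt_pheight (y := y) hp fun m hm => ?_)
    exact ((ulmSeqOf_monotone y hm.le).trans_lt hi).trans_le (coe_le_pheight_iff.2 (hanchor i))
  refine ⟨-w, fun i => ?_⟩
  have hev : ∀ᶠ j in atTop, ∀ m, UlmSeqOf p y m < ord i → UlmSeqOf p y (m + k) < ord j := by
    by_cases h : ∃ n, (ord i : WithTop Ordinal.{u}) ≤ UlmSeqOf p y n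
    · obtain ⟨n, hn⟩ := h
      obtain ⟨i', hi'⟩ := hunbdd (n + k)
      filter_upwards [eventually_ge_atTop i'] with j hj m hm
      have hmn : m < n := (ulmSeqOf_monotone y).reflect_lt (hm.trans_le hn)
      exact ((ulmSeqOf_monotone y (by omega)).trans_lt hi').trans_le
        (WithTop.coe_le_coe.2 (hord hj))
    · push Not at h
      filter_upwards [eventually_ge_atTop i] with j hj m _
      exact (h (m + k)).trans_le (WithTop.coe_le_coe.2 (hord hj))
  filter_upwards [hev] with j hj
  rw [← coe_le_pheight_iff]
  refine le_pheight_of_ulmSeqOf_lt hp fun m hm => (hj m hm).trans_le (coe_le_pheight_iff.2 ?_)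
  rw [show p ^ k * (-w - e j) = -(p ^ k * w + p ^ k * e j) by ring, neg_smul]
  exact neg_mem (hanchor j)

theorem exists_lim_coeff [Nonempty ι] (hp : Irreducible p) (hord : Monotone ord) {c : R} {k : ℕ}
    (hcauchy : ∀ i j, i ≤ j → (e j - e i) • y ∈ ppow p (ord i))
    (hanchor : ∀ i, (c + p ^ k * e i) • y ∈ ppow p (ord i)) :
    ∃ l : R, ∀ i, ∀ᶠ j in atTop, (l - e j) • y ∈ ppow p (ord i) := by
  by_cases hbdd : ∃ m, ∀ i, (ord i : WithTop Ordinal.{u}) ≤ UlmSeqOf p y m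
  · exact exists_lim_coeff_of_le_ulmSeqOf hp hord hcauchy hbdd
  · push Not at hbdd
    exact exists_lim_coeff_of_ulmSeqOf_lt hp hord hanchor hbdd

theorem IsDecompWrt.exists_max_pheight_add_span (hp : Irreducible p) {Z Y : Set M}
    (hZfin : Z.Finite) (hZ : IsDecompWrt p Z) (hYZ : Y ⊆ Z) {x : M} (hx : x ∈ hull (span R Z)) :
    ∃ h ∈ span R Y, ∀ h' ∈ span R Y, pheight p (x + h') ≤ pheight p (x + h) := by
  set ZF := hZfin.toFinset
  set YF := (hZfin.subset hYZ).toFinset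
  have hZF : (ZF : Set M) = Z := Set.Finite.coe_toFinset _
  have hYF : (YF : Set M) = Y := Set.Finite.coe_toFinset _
  have hYFZF : YF ⊆ ZF := Set.Finite.toFinset_subset_toFinset.2 hYZ
  obtain ⟨k, hk⟩ := exists_pow_smul_mem_of_mem_hull hp hx
  obtain ⟨c, -, hc⟩ := mem_span_finset.1 (hZF ▸ hk)
  let D : Set Ordinal.{u} := {β | ∃ h ∈ span R Y, x + h ∈ ppow p β}
  have : Nonempty D := ⟨⟨0, 0, zero_mem _, by simp [ppow_zero]⟩⟩
  have hnet : ∀ i : D, ∃ f : M → R, f.support ⊆ YF ∧ x + ∑ y ∈ YF, f y • y ∈ ppow p i := by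
    rintro ⟨β, h, hh, hxh⟩
    obtain ⟨f, hf, rfl⟩ := mem_span_finset.1 (show h ∈ span R (YF : Set M) by rwa [hYF])
    exact ⟨f, hf, hxh⟩
  choose e he_supp he_mem using hnet
  have hlim : ∀ y ∈ YF, ∃ l : R, ∀ i : D, ∀ᶠ j in atTop, (l - e j y) • y ∈ ppow p i :=
    fun y hy => exists_lim_coeff (e := fun i => e i y) hp (Subtype.mono_coe _)
      (fun i j hij => hZ.sub_smul_mem_ppow (hYF ▸ hYZ) (he_mem i)
        (ppow_antitone hij (he_mem j)) hy)
      (fun i => hZ.add_pow_mul_smul_mem_ppow hYFZF hZF.subset hc (he_supp i) (he_mem i)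
        (hYFZF hy))
  choose! l hl using hlim
  refine ⟨∑ y ∈ YF, l y • y, sum_mem fun y hy => smul_mem _ _ (subset_span (hYF ▸ hy)),
    fun h' hh' => pheight_le_pheight fun β hβ => ?_⟩
  obtain ⟨j, hij, hj⟩ := ((eventually_ge_atTop (⟨β, h', hh', hβ⟩ : D)).and
    ((Finset.eventually_all YF).2 fun y hy => hl y hy ⟨β, h', hh', hβ⟩)).exists
  have hsplit : x + ∑ y ∈ YF, l y • y
      = (x + ∑ y ∈ YF, e j y • y) + ∑ y ∈ YF, (l y - e j y) • y := by
    simp [sub_smul, Finset.sum_sub_distrib]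
  rw [hsplit]
  exact add_mem (ppow_antitone hij (he_mem j)) (sum_mem hj)

end DiscreteValuationRing

end UlmW

theorem statement_9 (p : ℤ) [Fact (Prime p)] {G : Type u} [AddCommGroup G]
    [Module (Zp p) G]
    (C : Set (Set G)) (hC : IsPDBWrt (p : Zp p) C)
    (X : Set G) (hX : X ∈ C) (Y : Set G) (hYX : Y ⊆ X) :
    IsNice (p : Zp p) (Submodule.span (Zp p) Y) := by
  intro x
  obtain ⟨-, hfin, hdecomp, hext⟩ := hC
  obtain ⟨Z, hZC, hXZ, hxZ⟩ := hext X hX x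
  exact (hdecomp Z hZC).exists_max_pheight_add_span (Zp.irreducible_p p) (hfin Z hZC)
    (hYX.trans hXZ) hxZ

end
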